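/- arXiv:2011.06524 — 3 statements merged into one kernel-verified Lean document; each statement's English description precedes it below -/
import Mathlib

section
/- Let C be a symmetrizable GCM whose associated valued graph Γ(C) is connected. Then there exists a minimal symmetrizer D_min of C such that every symmetrizer D of C equals m·D_min for some positive integer m. -/
def IsGCM {ι : Type*} (C : Matrix ι ι ℤ) : Prop :=
  (∀ i, C i i = 2) ∧ (∀ i j, i ≠ j → C i j ≤ 0) ∧ (∀ i j, C i j ≠ 0 ↔ C j i ≠ 0)

def IsSymmetrizer {ι : Type*} [Fintype ι] [DecidableEq ι]
    (C : Matrix ι ι ℤ) (d : ι → ℤ) : Prop :=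
  (∀ i, 1 ≤ d i) ∧ (Matrix.diagonal d * C).IsSymm

/-- The valued graph `Γ(C)`: an edge between `i` and `j` iff `c_{ij} < 0`. -/
def valuedGraph {n : ℕ} (C : Matrix (Fin n) (Fin n) ℤ) : SimpleGraph (Fin n) :=
  SimpleGraph.fromRel (fun i j => C i j < 0)

lemma symm_entry {n : ℕ} {C : Matrix (Fin n) (Fin n) ℤ} {d : Fin n → ℤ}
    (h : (Matrix.diagonal d * C).IsSymm) (i j : Fin n) :
    d i * C i j = d j * C j i := by
  have := h.apply i j
  simpa [Matrix.diagonal_mul, Matrix.transpose_apply] using this.symm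

lemma prop_lemma {n : ℕ} {C : Matrix (Fin n) (Fin n) ℤ} (hC : IsGCM C)
    {d e : Fin n → ℤ} (hd : IsSymmetrizer C d) (he : IsSymmetrizer C e)
    {i j : Fin n} (h : (valuedGraph C).Reachable i j) :
    d i * e j = e i * d j := by
  obtain ⟨w⟩ := h
  induction w with
  | nil => ring
  | @cons i k j hadj p ih =>
    -- step: d i * e k = e i * d k
    have hik : C i k ≠ 0 := by
      rw [valuedGraph, SimpleGraph.fromRel_adj] at hadj
      rcases hadj.2 with h1 | h1
      · exact ne_of_lt h1
      · exact (hC.2.2 i k).mpr (ne_of_lt h1)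
    have h1 : d i * C i k = d k * C k i := symm_entry hd.2 i k
    have h2 : e i * C i k = e k * C k i := symm_entry he.2 i k
    have step : d i * e k = e i * d k := by
      have : (d i * e k) * C i k = (e i * d k) * C i k := by
        calc (d i * e k) * C i k = e k * (d i * C i k) := by ring
        _ = e k * (d k * C k i) := by rw [h1]
        _ = d k * (e k * C k i) := by ring
        _ = d k * (e i * C i k) := by rw [← h2]
        _ = (e i * d k) * C i k := by ring
      exact mul_right_cancel₀ hik this
    have hek : e k ≠ 0 := by have := he.1 k; omega
    have : (d i * e j) * e k = (e i * d j) * e k := by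
      calc (d i * e j) * e k = (d i * e k) * e j := by ring
      _ = (e i * d k) * e j := by rw [step]
      _ = e i * (d k * e j) := by ring
      _ = e i * (e k * d j) := by rw [ih]
      _ = (e i * d j) * e k := by ring
    exact mul_right_cancel₀ hek this

/-- a connected symmetrizable GCM has a minimal symmetrizer `D_min`,
of which every symmetrizer is a positive integer multiple. -/
theorem stmt_1 {n : ℕ} (C : Matrix (Fin n) (Fin n) ℤ) (hC : IsGCM C)
    (hsymmetrizable : ∃ d, IsSymmetrizer C d)
    (hconn : (valuedGraph C).Connected) :
    ∃ dmin : Fin n → ℤ, IsSymmetrizer C dmin ∧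
      ∀ d : Fin n → ℤ, IsSymmetrizer C d → ∃ m : ℤ, 0 < m ∧ d = m • dmin := by
  obtain ⟨d0, hd0⟩ := hsymmetrizable
  haveI : Nonempty (Fin n) := hconn.nonempty
  obtain ⟨i0⟩ := ‹Nonempty (Fin n)›
  set g : ℤ := Finset.univ.gcd d0 with hg
  have hdvd : ∀ i, g ∣ d0 i := fun i => Finset.gcd_dvd (Finset.mem_univ i)
  have hgnn : 0 ≤ g := by
    have := Finset.normalize_gcd (s := Finset.univ) (f := d0)
    rw [← hg] at this
    rw [← this]
    rw [← Int.abs_eq_normalize]; exact abs_nonneg g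
  have hgne : g ≠ 0 := by
    intro h
    have := (Finset.gcd_eq_zero_iff.mp (hg ▸ h)) i0 (Finset.mem_univ i0)
    have := hd0.1 i0
    omega
  have hgpos : 0 < g := lt_of_le_of_ne hgnn (Ne.symm hgne)
  set dmin : Fin n → ℤ := fun i => d0 i / g with hdmin
  have heq : ∀ i, g * dmin i = d0 i := fun i => Int.mul_ediv_cancel' (hdvd i)
  have hpos : ∀ i, 1 ≤ dmin i := by
    intro i
    have h1 : 0 < g * dmin i := by rw [heq]; have := hd0.1 i; omega
    nlinarith
  have hdminsymm : (Matrix.diagonal dmin * C).IsSymm := by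
    rw [Matrix.IsSymm]
    ext i j
    simp only [Matrix.transpose_apply, Matrix.diagonal_mul]
    have : g * (dmin j * C j i) = g * (dmin i * C i j) := by
      have h1 := symm_entry hd0.2 i j
      calc g * (dmin j * C j i) = (g * dmin j) * C j i := by ring
      _ = d0 j * C j i := by rw [heq]
      _ = d0 i * C i j := h1.symm
      _ = (g * dmin i) * C i j := by rw [heq]
      _ = g * (dmin i * C i j) := by ring
    exact mul_left_cancel₀ hgne this
  have hdminSym : IsSymmetrizer C dmin := ⟨hpos, hdminsymm⟩
  have hgcd1 : Finset.univ.gcd dmin = 1 := by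
    have := Finset.gcd_div_eq_one (s := Finset.univ) (f := d0)
      (Finset.mem_univ i0) (by have := hd0.1 i0; omega)
    simpa [hdmin, hg] using this
  refine ⟨dmin, hdminSym, ?_⟩
  intro d hd
  have hprop : ∀ i j : Fin n, d i * dmin j = dmin i * d j := fun i j =>
    prop_lemma hC hd hdminSym (hconn.preconnected i j)
  have hdvd' : dmin i0 ∣ d i0 := by
    have h1 : dmin i0 ∣ Finset.univ.gcd (fun j => d i0 * dmin j) :=
      Finset.dvd_gcd (fun j _ => ⟨d j, hprop i0 j⟩)
    rw [Finset.gcd_mul_left, hgcd1, mul_one] at h1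
    exact (dvd_abs _ _).mp (by simpa [← Int.abs_eq_normalize] using h1)
  set m : ℤ := d i0 / dmin i0 with hm
  have hdminne : dmin i0 ≠ 0 := by have := hpos i0; omega
  have hmeq : dmin i0 * m = d i0 := Int.mul_ediv_cancel' hdvd'
  have hmpos : 0 < m := by
    have h1 : 0 < dmin i0 * m := by rw [hmeq]; have := hd.1 i0; omega
    have := hpos i0
    nlinarith
  refine ⟨m, hmpos, ?_⟩
  funext j
  have h1 := hprop i0 j
  rw [← hmeq] at h1
  have : dmin i0 * (m * dmin j) = dmin i0 * d j := by
    calc dmin i0 * (m * dmin j) = (dmin i0 * m) * dmin j := by ring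
    _ = dmin i0 * d j := h1
  have h2 := mul_left_cancel₀ hdminne this
  simp [Pi.smul_apply, smul_eq_mul, ← h2]
end

section
/- Let K be a field, c ≥ 1, and R = K[ε]/(ε^c). If f : M → N is an injective R-module homomorphism between finitely generated free R-modules, then coker f is a finitely generated free R-module. -/
/-- The truncated polynomial ring `K[ε]/(ε^c)`. -/
noncomputable abbrev TruncPoly (K : Type*) [Field K] (c : ℕ) : Type _ :=
  AdjoinRoot (Polynomial.X ^ c : Polynomial K)

open Polynomial in
lemma truncPoly_root_pow (K : Type*) [Field K] (c : ℕ) :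
    (AdjoinRoot.root (X ^ c : K[X])) ^ c = 0 := by
  rw [← AdjoinRoot.mk_X, ← map_pow, AdjoinRoot.mk_self]

open Polynomial in
lemma truncPoly_isLocalRing (K : Type*) [Field K] (c : ℕ) (hc : 1 ≤ c) :
    IsLocalRing (TruncPoly K c) := by
  haveI : Nontrivial (TruncPoly K c) := by
    refine AdjoinRoot.nontrivial _ ?_
    rw [degree_X_pow]
    exact_mod_cast (by omega : (c : ℕ) ≠ 0)
  refine IsLocalRing.of_isUnit_or_isUnit_one_sub_self ?_
  intro a
  obtain ⟨q, rfl⟩ := AdjoinRoot.mk_surjective (g := (X ^ c : K[X])) a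
  have hdvd : X ∣ (q - C (q.coeff 0)) := X_dvd_iff.mpr (by simp)
  obtain ⟨t, ht⟩ := hdvd
  have hq : AdjoinRoot.mk (X ^ c : K[X]) q
      = AdjoinRoot.mk _ (C (q.coeff 0)) + AdjoinRoot.root _ * AdjoinRoot.mk _ t := by
    rw [← AdjoinRoot.mk_X, ← map_mul, ← map_add, ← ht]
    ring_nf
  have hnil : IsNilpotent (AdjoinRoot.root (X ^ c : K[X]) * AdjoinRoot.mk _ t) := by
    refine ⟨c, ?_⟩
    rw [mul_pow, truncPoly_root_pow, zero_mul]
  by_cases h0 : q.coeff 0 = 0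
  · right
    simp only [hq, h0, map_zero, zero_add]
    exact hnil.isUnit_one_sub
  · left
    rw [hq]
    refine hnil.isUnit_add_left_of_commute ?_ (Commute.all _ _)
    exact (isUnit_C.mpr (Ne.isUnit h0)).map (AdjoinRoot.mk _)

open Polynomial in
lemma truncPoly_baer (K : Type*) [Field K] (c : ℕ) :
    Module.Baer (TruncPoly K c) (TruncPoly K c) := by
  intro I g
  set R := TruncPoly K c
  set mk : K[X] →+* R := AdjoinRoot.mk (X ^ c : K[X]) with hmkdef
  -- The ideal `I` is generated by `root ^ k` for some `k ≤ c`.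
  set J : Ideal K[X] := I.comap mk with hJ
  have hXc : (X : K[X]) ^ c ∈ J := by
    simp only [hJ, Ideal.mem_comap]
    rw [show mk (X ^ c) = 0 from AdjoinRoot.mk_self]
    exact I.zero_mem
  have hJp : J = Ideal.span {Submodule.IsPrincipal.generator J} :=
    (Ideal.span_singleton_generator J).symm
  have hpdvd : Submodule.IsPrincipal.generator J ∣ X ^ c := by
    rw [← Ideal.mem_span_singleton, ← hJp]; exact hXc
  obtain ⟨k, hkc, hassoc⟩ := (dvd_prime_pow Polynomial.prime_X c).mp hpdvd
  have hJX : J = Ideal.span {(X : K[X]) ^ k} := by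
    rw [hJp]
    exact Ideal.span_singleton_eq_span_singleton.mpr hassoc
  have hsurj : Function.Surjective mk := AdjoinRoot.mk_surjective
  have hI : I = Ideal.span {(AdjoinRoot.root (X ^ c : K[X])) ^ k} := by
    have := Ideal.map_comap_of_surjective mk hsurj I
    rw [← this, ← hJ, hJX, Ideal.map_span]
    simp [mk, ← AdjoinRoot.mk_X, ← map_pow]
    rfl
  set e : R := (AdjoinRoot.root (X ^ c : K[X])) ^ k with he
  have heI : e ∈ I := by rw [hI]; exact Ideal.subset_span rfl
  set r : R := g ⟨e, heI⟩ with hr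
  -- `root ^ (c - k) * r = 0`
  have hann : (AdjoinRoot.root (X ^ c : K[X])) ^ (c - k) * r = 0 := by
    have : ((AdjoinRoot.root (X ^ c : K[X])) ^ (c - k)) • (⟨e, heI⟩ : I) = (0 : I) := by
      ext
      show (AdjoinRoot.root (X ^ c : K[X])) ^ (c - k) * e = 0
      rw [he, ← pow_add, Nat.sub_add_cancel hkc, truncPoly_root_pow]
    calc (AdjoinRoot.root (X ^ c : K[X])) ^ (c - k) * r
        = g (((AdjoinRoot.root (X ^ c : K[X])) ^ (c - k)) • ⟨e, heI⟩) := by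
          rw [map_smul]; rfl
      _ = 0 := by rw [this, map_zero]
  -- hence `r = e * s` for some `s`
  obtain ⟨q, hq⟩ := hsurj r
  have hdvd : (X : K[X]) ^ k ∣ q := by
    have h0 : mk (X ^ (c - k) * q) = 0 := by
      rw [map_mul, map_pow, AdjoinRoot.mk_X, hq, hann]
    have hdvd' : (X : K[X]) ^ c ∣ X ^ (c - k) * q := AdjoinRoot.mk_eq_zero.mp h0
    have hc' : (X : K[X]) ^ c = X ^ (c - k) * X ^ k := by
      rw [← pow_add, Nat.sub_add_cancel hkc]
    rw [hc'] at hdvd'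
    exact (mul_dvd_mul_iff_left (pow_ne_zero (c - k) X_ne_zero)).mp hdvd'
  obtain ⟨t, ht⟩ := hdvd
  have hres : r = e * mk t := by
    rw [← hq, ht, map_mul, map_pow, AdjoinRoot.mk_X, he]
  refine ⟨LinearMap.toSpanSingleton R R (mk t), ?_⟩
  intro x hx
  rw [hI, Ideal.mem_span_singleton'] at hx
  obtain ⟨a, ha⟩ := hx
  have hxI : x ∈ I := by rw [hI]; exact Ideal.mem_span_singleton'.mpr ⟨a, ha⟩
  have : (⟨x, hxI⟩ : I) = a • ⟨e, heI⟩ := by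
    ext; show x = a * e; rw [← ha]
  have hgx : g ⟨x, hxI⟩ = a * r := by
    rw [this, map_smul, smul_eq_mul, hr]
  show LinearMap.toSpanSingleton R R (mk t) x = g ⟨x, hxI⟩
  rw [LinearMap.toSpanSingleton_apply, smul_eq_mul, hgx, hres, ← ha]
  ring

/-- A product of copies of an injective module is injective. -/
lemma Module.Injective.pi' {R : Type*} [Ring R] {Q : Type v} [AddCommGroup Q] [Module R Q]
    [Module.Injective R Q] (ι : Type v) : Module.Injective R (ι → Q) := by
  constructor
  intro X Y _ _ _ _ f hf g
  have H := fun i : ι =>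
    Module.Injective.out (Q := Q) f hf ((LinearMap.proj (φ := fun _ : ι => Q) i).comp g)
  choose h hh using H
  refine ⟨LinearMap.pi h, ?_⟩
  intro x
  ext i
  exact hh i x


/-- over `R = K[ε]/(ε^c)` (`c ≥ 1`), the cokernel of an injective
`R`-linear map between finitely generated free `R`-modules is finitely generated
free. -/
theorem stmt_10 (K : Type*) [Field K] (c : ℕ) (hc : 1 ≤ c)
    (M N : Type*) [AddCommGroup M] [AddCommGroup N]
    [Module (TruncPoly K c) M] [Module (TruncPoly K c) N]
    [Module.Finite (TruncPoly K c) M] [Module.Free (TruncPoly K c) M]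
    [Module.Finite (TruncPoly K c) N] [Module.Free (TruncPoly K c) N]
    (f : M →ₗ[TruncPoly K c] N) (hf : Function.Injective f) :
    Module.Finite (TruncPoly K c) (N ⧸ LinearMap.range f) ∧
      Module.Free (TruncPoly K c) (N ⧸ LinearMap.range f) := by
  set R := TruncPoly K c
  haveI : IsLocalRing R := truncPoly_isLocalRing K c hc
  haveI : Module.Injective R R := (truncPoly_baer K c).injective
  haveI : Module.Injective R (ULift (Fin (Module.finrank R M)) → R) :=
    Module.Injective.pi' _
  -- transport `f` to a map between standard free modules
  let eM : M ≃ₗ[R] (ULift (Fin (Module.finrank R M)) → R) :=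
    ((Module.finBasis R M).reindex Equiv.ulift.symm).equivFun
  let eN : N ≃ₗ[R] (ULift (Fin (Module.finrank R N)) → R) :=
    ((Module.finBasis R N).reindex Equiv.ulift.symm).equivFun
  let f' : (ULift (Fin (Module.finrank R M)) → R) →ₗ[R]
      (ULift (Fin (Module.finrank R N)) → R) :=
    (eN.toLinearMap.comp f).comp eM.symm.toLinearMap
  have hf' : Function.Injective f' := by
    intro x y h
    apply eM.symm.injective
    apply hf
    apply eN.injective
    exact h
  obtain ⟨h, hh⟩ := Module.Injective.out f' hf' LinearMap.id
  -- `g : N →ₗ M` is a retraction of `f`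
  let g : N →ₗ[R] M := (eM.symm.toLinearMap.comp h).comp eN.toLinearMap
  have hgf : ∀ m : M, g (f m) = m := by
    intro m
    have : eN (f m) = f' (eM m) := by simp [f']
    simp only [g, LinearMap.comp_apply, LinearEquiv.coe_coe, this, hh]
    simp
  have hcompl : IsCompl (LinearMap.range f) (LinearMap.ker g) := by
    constructor
    · rw [Submodule.disjoint_def]
      rintro x ⟨m, rfl⟩ hx
      rw [LinearMap.mem_ker, hgf] at hx
      rw [hx, map_zero]
    · rw [codisjoint_iff, eq_top_iff]
      intro n _
      rw [Submodule.mem_sup]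
      refine ⟨f (g n), ⟨g n, rfl⟩, n - f (g n), ?_, by abel⟩
      rw [LinearMap.mem_ker, map_sub, hgf, sub_self]
  let e : (N ⧸ LinearMap.range f) ≃ₗ[R] (LinearMap.ker g) :=
    Submodule.quotientEquivOfIsCompl _ _ hcompl
  haveI hfin : Module.Finite R (N ⧸ LinearMap.range f) :=
    Module.Finite.quotient R _
  haveI : Module.Projective R (N ⧸ LinearMap.range f) := by
    refine Module.Projective.of_split
      ((LinearMap.ker g).subtype.comp e.toLinearMap) (LinearMap.range f).mkQ ?_
    ext x
    simp only [LinearMap.comp_apply, LinearMap.id_apply, Submodule.coe_subtype,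
      LinearEquiv.coe_coe, Submodule.mkQ_apply]
    exact Submodule.mk_quotientEquivOfIsCompl_apply hcompl (Submodule.Quotient.mk x)
  haveI : IsNoetherianRing R := by
    show IsNoetherianRing (TruncPoly K c)
    unfold TruncPoly AdjoinRoot
    exact Ideal.Quotient.isNoetherianRing _
  haveI : Module.FinitePresentation R (N ⧸ LinearMap.range f) :=
    Module.finitePresentation_of_finite R _
  haveI : Module.Free R (N ⧸ LinearMap.range f) :=
    Module.free_of_flat_of_isLocalRing
  exact ⟨hfin, inferInstance⟩
end

section
/- Let A be the category of finite-length modules over a ring and θ : K_0(A) → ℝ an additive function on the Grothendieck group. Define 𝒯_θ := {M : θ(N) > 0 for every nonzero quotient N of M} and \bar{ℱ}_θ := {M : θ(L) ≤ 0 for every subobject L of M}. Then (𝒯_θ, \bar{ℱ}_θ) is a torsion pair: Hom(T, F) = 0 for T ∈ 𝒯_θ, F ∈ \bar{ℱ}_θ, and every module M has a subobject M' ∈ 𝒯_θ with M/M' ∈ \bar{ℱ}_θ. -/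
universe u v

section Helpers

variable {R : Type u} [Ring R]
variable (θ : ∀ (A : Type v) [AddCommGroup A] [Module R A], ℝ)

/-- additivity hypothesis -/
def ThetaAdd : Prop :=
  ∀ (L M N : Type v) [AddCommGroup L] [Module R L]
    [AddCommGroup M] [Module R M] [AddCommGroup N] [Module R N],
    IsNoetherian R M → IsArtinian R M →
    ∀ (f : L →ₗ[R] M) (g : M →ₗ[R] N), Function.Injective f →
      Function.Surjective g → LinearMap.range f = LinearMap.ker g →
      θ M = θ L + θ N

variable {θ}

lemma theta_subsingleton (h : ThetaAdd θ) (Z : Type v) [AddCommGroup Z] [Module R Z]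
    [Subsingleton Z] : θ Z = 0 := by
  have h2 := h Z Z Z inferInstance inferInstance LinearMap.id 0
    (fun a b _ => Subsingleton.elim a b) (fun y => ⟨0, Subsingleton.elim _ _⟩)
    (by rw [LinearMap.range_id, LinearMap.ker_zero])
  linarith

lemma theta_congr (h : ThetaAdd θ) {X Y : Type v} [AddCommGroup X] [Module R X]
    [AddCommGroup Y] [Module R Y] [IsNoetherian R X] [IsArtinian R X]
    (e : X ≃ₗ[R] Y) : θ X = θ Y := by
  have h2 := h PUnit.{v+1} X Y inferInstance inferInstance 0 e.toLinearMap
    (fun a b _ => Subsingleton.elim a b) e.surjective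
    (by rw [LinearMap.range_zero, LinearEquiv.ker])
  rw [theta_subsingleton h PUnit.{v+1}] at h2
  linarith

lemma theta_ses (h : ThetaAdd θ) {X : Type v} [AddCommGroup X] [Module R X]
    [IsNoetherian R X] [IsArtinian R X] (p : Submodule R X) :
    θ X = θ ↥p + θ (X ⧸ p) :=
  h ↥p X (X ⧸ p) inferInstance inferInstance p.subtype p.mkQ p.injective_subtype
    p.mkQ_surjective (by rw [Submodule.range_subtype, Submodule.ker_mkQ])

variable (θ) in
/-- torsion class -/
def IsTor (X : Type v) [AddCommGroup X] [Module R X] : Prop :=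
  ∀ p : Submodule R X, p ≠ ⊤ → 0 < θ (X ⧸ p)

lemma istor_of_subsingleton (X : Type v) [AddCommGroup X] [Module R X]
    [Subsingleton X] : IsTor θ X := by
  intro p hp
  refine absurd ?_ hp
  rw [Submodule.eq_top_iff']
  intro x
  rw [Subsingleton.elim x 0]
  exact p.zero_mem

lemma istor_congr (h : ThetaAdd θ) {X Y : Type v} [AddCommGroup X] [Module R X]
    [AddCommGroup Y] [Module R Y] [IsNoetherian R X] [IsArtinian R X]
    (e : X ≃ₗ[R] Y) (hX : IsTor θ X) : IsTor θ Y := by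
  intro p hp
  have hmap : Submodule.map (e : X →ₗ[R] Y) (Submodule.comap (e : X →ₗ[R] Y) p) = p :=
    Submodule.map_comap_eq_of_surjective e.surjective p
  have hc : Submodule.comap (e : X →ₗ[R] Y) p ≠ ⊤ := by
    intro hcT
    apply hp
    rw [← hmap, hcT, Submodule.map_top, LinearMap.range_eq_top]
    exact e.surjective
  have equot : (X ⧸ Submodule.comap (e : X →ₗ[R] Y) p) ≃ₗ[R] (Y ⧸ p) :=
    Submodule.Quotient.equiv _ p e hmap
  calc (0:ℝ) < θ (X ⧸ Submodule.comap (e : X →ₗ[R] Y) p) := hX _ hc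
    _ = θ (Y ⧸ p) := theta_congr h equot

end Helpers

section Ext
variable {R : Type u} [Ring R]
variable {θ : ∀ (A : Type v) [AddCommGroup A] [Module R A], ℝ}

lemma istor_ext (h : ThetaAdd θ) {X : Type v} [AddCommGroup X] [Module R X]
    [IsNoetherian R X] [IsArtinian R X] (p : Submodule R X)
    (hp : IsTor θ ↥p) (hq : IsTor θ (X ⧸ p)) : IsTor θ X := by
  intro q hqtop
  have h1 : θ X = θ ↥q + θ (X ⧸ q) := theta_ses h q
  have h2 : θ X = θ ↥(p ⊔ q) + θ (X ⧸ (p ⊔ q)) := theta_ses h (p ⊔ q)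
  have h3 : θ ↥(p ⊔ q) = θ ↥(Submodule.comap (p ⊔ q).subtype q)
      + θ (↥(p ⊔ q) ⧸ Submodule.comap (p ⊔ q).subtype q) := theta_ses h _
  have h4 : θ ↥(Submodule.comap (p ⊔ q).subtype q) = θ ↥q :=
    theta_congr h (Submodule.comapSubtypeEquivOfLe le_sup_right)
  have h5 : θ (↥p ⧸ Submodule.comap p.subtype (p ⊓ q))
      = θ (↥(p ⊔ q) ⧸ Submodule.comap (p ⊔ q).subtype q) :=
    theta_congr h (LinearMap.quotientInfEquivSupQuotient p q)
  have key : θ (X ⧸ q) = θ (X ⧸ (p ⊔ q)) + θ (↥p ⧸ Submodule.comap p.subtype (p ⊓ q)) := by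
    linarith
  have hA : p ⊔ q ≠ ⊤ → 0 < θ (X ⧸ (p ⊔ q)) := by
    intro hne
    have e := Submodule.quotientQuotientEquivQuotient p (p ⊔ q) le_sup_left
    have hmtop : Submodule.map p.mkQ (p ⊔ q) ≠ ⊤ := by
      intro hT
      apply hne
      have h8 := (Submodule.map_mkQ_eq_top p (p ⊔ q)).mp hT
      rwa [← sup_assoc, sup_idem] at h8
    calc (0:ℝ) < θ ((X ⧸ p) ⧸ Submodule.map p.mkQ (p ⊔ q)) := hq _ hmtop
      _ = θ (X ⧸ (p ⊔ q)) := theta_congr h e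
  have hA0 : p ⊔ q = ⊤ → θ (X ⧸ (p ⊔ q)) = 0 := by
    intro ht
    haveI : Subsingleton (X ⧸ (p ⊔ q)) := Submodule.Quotient.subsingleton_iff.mpr ht
    exact theta_subsingleton h _
  by_cases hpq : p ≤ q
  · have h6 : θ (↥p ⧸ Submodule.comap p.subtype (p ⊓ q)) = 0 := by
      haveI : Subsingleton (↥p ⧸ Submodule.comap p.subtype (p ⊓ q)) := by
        rw [Submodule.Quotient.subsingleton_iff, Submodule.comap_subtype_eq_top]
        exact le_inf le_rfl hpq
      exact theta_subsingleton h _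
    have h7 : p ⊔ q ≠ ⊤ := by rw [sup_eq_right.mpr hpq]; exact hqtop
    have h8 := hA h7
    linarith only [key, h6, h8]
  · have h6 : 0 < θ (↥p ⧸ Submodule.comap p.subtype (p ⊓ q)) := by
      refine hp _ fun hT => hpq ?_
      exact (le_inf_iff.mp (Submodule.comap_subtype_eq_top.mp hT)).2
    have h7 : 0 ≤ θ (X ⧸ (p ⊔ q)) := by
      by_cases ht : p ⊔ q = ⊤
      · exact le_of_eq (hA0 ht).symm
      · exact (hA ht).le
    linarith only [key, h6, h7]

end Ext

section Main
variable {R : Type u} [Ring R]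
variable {θ : ∀ (A : Type v) [AddCommGroup A] [Module R A], ℝ}

lemma bot_subsingleton' (X : Type v) [AddCommGroup X] [Module R X] :
    Subsingleton ↥(⊥ : Submodule R X) :=
  ⟨fun a b => Subtype.ext
    (((Submodule.mem_bot R).mp a.2).trans ((Submodule.mem_bot R).mp b.2).symm)⟩

lemma exists_tor_sub (h : ThetaAdd θ) {X : Type v} [AddCommGroup X] [Module R X]
    [IsNoetherian R X] [IsArtinian R X] (N : Submodule R X) (hN : 0 < θ ↥N) :
    ∃ N' : Submodule R X, N' ≤ N ∧ IsTor θ ↥N' ∧ N' ≠ ⊥ := by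
  refine IsArtinian.induction
    (P := fun N => 0 < θ ↥N → ∃ N' : Submodule R X, N' ≤ N ∧ IsTor θ ↥N' ∧ N' ≠ ⊥)
    ?_ N hN
  intro I IH hI
  by_cases hT : IsTor θ ↥I
  · refine ⟨I, le_rfl, hT, ?_⟩
    intro hbot
    subst hbot
    haveI := bot_subsingleton' (R := R) X
    have h0 := theta_subsingleton h ↥(⊥ : Submodule R X)
    linarith only [hI, h0]
  · unfold IsTor at hT
    push_neg at hT
    obtain ⟨p, hpne, hple⟩ := hT
    have hPle : Submodule.map I.subtype p ≤ I := Submodule.map_subtype_le I p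
    have hPlt : Submodule.map I.subtype p < I := by
      refine lt_of_le_of_ne hPle fun he => hpne ?_
      have h1 := Submodule.comap_map_eq_of_injective I.injective_subtype p
      rw [he] at h1
      rw [← h1, Submodule.comap_subtype_self]
    have hiso : θ ↥p = θ ↥(Submodule.map I.subtype p) :=
      theta_congr h (Submodule.equivMapOfInjective I.subtype I.injective_subtype p)
    have hses := theta_ses h p
    have hPpos : 0 < θ ↥(Submodule.map I.subtype p) := by
      linarith only [hI, hses, hiso, hple]
    obtain ⟨N', hle, hTor, hne⟩ := IH _ hPlt hPpos
    exact ⟨N', hle.trans hPle, hTor, hne⟩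

lemma torsion_part (h : ThetaAdd θ) (M : Type v) [AddCommGroup M] [Module R M]
    (hNoe : IsNoetherian R M) (hArt : IsArtinian R M) :
    ∃ M' : Submodule R M, IsTor θ ↥M' ∧ ∀ q : Submodule R (M ⧸ M'), θ ↥q ≤ 0 := by
  obtain ⟨M', hM'tor, hmax⟩ := (set_has_maximal_iff_noetherian.mpr hNoe)
    {N : Submodule R M | IsTor θ ↥N}
    ⟨⊥, by haveI := bot_subsingleton' (R := R) M; exact istor_of_subsingleton _⟩
  refine ⟨M', hM'tor, ?_⟩
  intro q
  by_contra hq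
  push_neg at hq
  obtain ⟨q₀, hq₀le, hq₀tor, hq₀ne⟩ := exists_tor_sub h q hq
  set P₀ := Submodule.comap M'.mkQ q₀ with hP₀
  have hle : M' ≤ P₀ := Submodule.le_comap_mkQ M' q₀
  have hmapP : Submodule.map M'.mkQ P₀ = q₀ :=
    Submodule.map_comap_eq_of_surjective M'.mkQ_surjective q₀
  have hlt : M' < P₀ := by
    refine lt_of_le_of_ne hle fun he => hq₀ne ?_
    rw [← hmapP, ← he]
    refine (Submodule.eq_bot_iff _).2 ?_
    rintro x ⟨y, hy, rfl⟩
    exact (Submodule.Quotient.mk_eq_zero _).2 hy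
  have hcomapTor : IsTor θ ↥(Submodule.comap P₀.subtype M') :=
    istor_congr h (Submodule.comapSubtypeEquivOfLe hle).symm hM'tor
  let f : ↥P₀ →ₗ[R] ↥q₀ :=
    LinearMap.codRestrict q₀ (M'.mkQ ∘ₗ P₀.subtype) (fun x => x.2)
  have hfsurj : Function.Surjective f := by
    rintro ⟨y, hy⟩
    obtain ⟨x, hx⟩ := M'.mkQ_surjective y
    refine ⟨⟨x, ?_⟩, ?_⟩
    · rw [Submodule.mem_comap, hx]; exact hy
    · exact Subtype.ext hx
  have hker : LinearMap.ker f = Submodule.comap P₀.subtype M' := by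
    ext x
    rw [LinearMap.mem_ker, Subtype.ext_iff]
    show M'.mkQ x.1 = 0 ↔ x ∈ Submodule.comap P₀.subtype M'
    rw [Submodule.mkQ_apply, Submodule.Quotient.mk_eq_zero]
    exact Iff.rfl
  have equot : (↥P₀ ⧸ LinearMap.ker f) ≃ₗ[R] ↥q₀ := f.quotKerEquivOfSurjective hfsurj
  have hquotTor : IsTor θ (↥P₀ ⧸ Submodule.comap P₀.subtype M') := by
    rw [← hker]
    exact istor_congr h equot.symm hq₀tor
  exact hmax P₀ (istor_ext h (Submodule.comap P₀.subtype M') hcomapTor hquotTor) hlt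

end Main

/-- let `θ` be an additive function on the Grothendieck group of the
category of finite-length `R`-modules. With
`𝒯_θ = {M : θ(N) > 0 for every nonzero quotient N of M}` and
`ℱ̄_θ = {M : θ(L) ≤ 0 for every submodule L of M}`, the pair `(𝒯_θ, ℱ̄_θ)` is a
torsion pair: `Hom` vanishes from `𝒯_θ` to `ℱ̄_θ`, and every finite-length module
`M` has a submodule `M' ∈ 𝒯_θ` with `M/M' ∈ ℱ̄_θ`. -/
theorem stmt_15 (R : Type u) [Ring R]
    (θ : ∀ (A : Type v) [AddCommGroup A] [Module R A], ℝ)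
    -- additivity of `θ` on short exact sequences of finite-length modules
    (hadd : ∀ (L M N : Type v) [AddCommGroup L] [Module R L]
      [AddCommGroup M] [Module R M] [AddCommGroup N] [Module R N],
      IsNoetherian R M → IsArtinian R M →
      ∀ (f : L →ₗ[R] M) (g : M →ₗ[R] N), Function.Injective f →
        Function.Surjective g → LinearMap.range f = LinearMap.ker g →
        θ M = θ L + θ N) :
    -- Hom vanishing
    (∀ (A : Type v) [AddCommGroup A] [Module R A]
      (B : Type v) [AddCommGroup B] [Module R B],
      IsNoetherian R A → IsArtinian R A → IsNoetherian R B → IsArtinian R B →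
      (∀ p : Submodule R A, p ≠ ⊤ → 0 < θ (A ⧸ p)) →
      (∀ q : Submodule R B, θ ↥q ≤ 0) →
      ∀ f : A →ₗ[R] B, f = 0) ∧
    -- existence of the torsion subobject
    (∀ (M : Type v) [AddCommGroup M] [Module R M],
      IsNoetherian R M → IsArtinian R M →
      ∃ M' : Submodule R M,
        (∀ p : Submodule R ↥M', p ≠ ⊤ → 0 < θ (↥M' ⧸ p)) ∧
        (∀ q : Submodule R (M ⧸ M'), θ ↥q ≤ 0)) := by
  constructor
  · intro A _ _ B _ _ hNoeA hArtA hNoeB hArtB hT hF f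
    haveI := hNoeA; haveI := hArtA
    by_contra hf
    have hkertop : LinearMap.ker f ≠ ⊤ := by rwa [Ne, LinearMap.ker_eq_top]
    have h1 := hT _ hkertop
    have h2 : θ (A ⧸ LinearMap.ker f) = θ ↥(LinearMap.range f) :=
      theta_congr hadd f.quotKerEquivRange
    have h3 := hF (LinearMap.range f)
    linarith only [h1, h2, h3]
  · intro M _ _ hNoe hArt
    haveI := hNoe; haveI := hArt
    obtain ⟨M', h1, h2⟩ := torsion_part hadd M hNoe hArt
    exact ⟨M', h1, h2⟩
end
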